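/- arXiv:2404.00446 — 2 statements merged into one kernel-verified Lean document; each statement's English description precedes it below -/
import Mathlib

section
/- Permutation equivalence preserves the projection onto each participant: if σ ~ σ', then for every participant r, the projection σ↾r equals σ'↾r. -/
structure Comm (P L : Type) where
  sender : P
  receiver : P
  label : L

def play {P L : Type} (α : Comm P L) : Set P := {α.sender, α.receiver}

abbrev Trace (P L : Type) := List (Comm P L)

def playT {P L : Type} : Trace P L → Set P
  | [] => ∅
  | α :: σ => play α ∪ playT σ

/-- Permutation equivalence: least equivalence relation swapping adjacent
communications with disjoint participant sets. -/
inductive PermEq {P L : Type} : Trace P L → Trace P L → Prop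
  | swap (σ σ' : Trace P L) (α α' : Comm P L) (h : play α ∩ play α' = ∅) :
      PermEq (σ ++ α :: α' :: σ') (σ ++ α' :: α :: σ')
  | refl (σ : Trace P L) : PermEq σ σ
  | symm {σ σ' : Trace P L} : PermEq σ σ' → PermEq σ' σ
  | trans {σ σ' σ'' : Trace P L} : PermEq σ σ' → PermEq σ' σ'' → PermEq σ σ''

/-- Local actions: outputs `q!λ` and inputs `p?λ`. -/
inductive LAction (P L : Type) where
  | out (q : P) (lab : L)
  | inp (p : P) (lab : L)

/-- Projection of a single communication onto a participant. -/
def projC {P L : Type} [DecidableEq P] (r : P) (α : Comm P L) : Option (LAction P L) :=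
  if r = α.sender then some (.out α.receiver α.label)
  else if r = α.receiver then some (.inp α.sender α.label)
  else none

/-- Projection of a trace onto a participant, applied pointwise. -/
def projT {P L : Type} [DecidableEq P] (r : P) (σ : Trace P L) : List (LAction P L) :=
  σ.filterMap (projC r)

theorem List.filterMap_swap_of_eq_none {α β : Type*} {f : α → Option β} {a b : α}
    (h : f a = none ∨ f b = none) (l l' : List α) :
    (l ++ a :: b :: l').filterMap f = (l ++ b :: a :: l').filterMap f := by
  simp only [List.filterMap_append, List.filterMap_cons]
  rcases h with h | h <;> simp [h]

theorem projC_eq_none_of_notMem {P L : Type} [DecidableEq P] {r : P} {α : Comm P L}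
    (hr : r ∉ play α) : projC r α = none := by
  simp only [play, Set.mem_insert_iff, Set.mem_singleton_iff, not_or] at hr
  simp [projC, hr.1, hr.2]

theorem projC_eq_none_or_of_disjoint {P L : Type} [DecidableEq P] {α α' : Comm P L}
    (h : play α ∩ play α' = ∅) (r : P) : projC r α = none ∨ projC r α' = none := by
  by_cases hr : r ∈ play α
  · exact .inr (projC_eq_none_of_notMem fun hr' => h.subset ⟨hr, hr'⟩)
  · exact .inl (projC_eq_none_of_notMem hr)

/-- permutation equivalence preserves the projection onto each participant. -/
theorem permEq_proj {P L : Type} [DecidableEq P] {σ σ' : Trace P L}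
    (h : PermEq σ σ') : ∀ r : P, projT r σ = projT r σ' := by
  induction h with
  | swap σ σ' α α' hd =>
    exact fun r => List.filterMap_swap_of_eq_none (projC_eq_none_or_of_disjoint hd r) σ σ'
  | refl _ => exact fun _ => rfl
  | symm _ ih => exact fun r => (ih r).symm
  | trans _ _ ih₁ ih₂ => exact fun r => (ih₁ r).trans (ih₂ r)
end

section
/- If σ is a pointed trace and σ ~ σ', then σ' is a pointed trace and last(σ) = last(σ'); in particular the last communication of a pointed trace is invariant under permutation equivalence. -/
/-- A non-empty trace is pointed if every communication except the last shares
a participant with some later communication in the trace. -/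
def IsPointed {P L : Type} (σ : Trace P L) : Prop :=
  σ ≠ [] ∧ ∀ i (hi : i + 1 < σ.length),
    ∃ j, i < j ∧ ∃ hj : j < σ.length,
      (play (σ.get ⟨i, by omega⟩) ∩ play (σ.get ⟨j, hj⟩)).Nonempty

/-! `α :: σ` is pointed iff `σ = []`, or `α` shares a participant with `σ` and `σ` is pointed.
Swapping adjacent `α, β` with disjoint participants preserves this: the participants of what
follows each earlier communication do not change, and `α`, having no partner in `β`, already had
one beyond the pair. For the same reason the pair does not end the trace, so the last
communication is unchanged. Disjoint swaps form a symmetric relation, so `PermEq` is their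
reflexive-transitive closure, and the claim follows along a chain of swaps. -/

variable {P L : Type}

theorem mem_playT {σ : Trace P L} {x : P} : x ∈ playT σ ↔ ∃ β ∈ σ, x ∈ play β := by
  induction σ with
  | nil => simp [playT]
  | cons α σ ih => simp [playT, ih]

theorem playT_append (σ τ : Trace P L) : playT (σ ++ τ) = playT σ ∪ playT τ := by
  induction σ with
  | nil => simp [playT]
  | cons α σ ih => simp [playT, ih, Set.union_assoc]

theorem inter_playT_nonempty_iff {A : Set P} {σ : Trace P L} :
    (A ∩ playT σ).Nonempty ↔ ∃ (j : ℕ) (hj : j < σ.length), (A ∩ play σ[j]).Nonempty := by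
  simp only [Set.Nonempty, Set.mem_inter_iff, mem_playT, List.mem_iff_getElem]
  constructor
  · rintro ⟨x, hxA, _, ⟨j, hj, rfl⟩, hx⟩
    exact ⟨j, hj, x, hxA, hx⟩
  · rintro ⟨j, hj, x, hxA, hx⟩
    exact ⟨x, hxA, _, ⟨j, hj, rfl⟩, hx⟩

theorem isPointed_cons {α : Comm P L} {σ : Trace P L} :
    IsPointed (α :: σ) ↔ σ = [] ∨ (play α ∩ playT σ).Nonempty ∧ IsPointed σ := by
  simp only [IsPointed, List.get_eq_getElem, List.length_cons, ne_eq, reduceCtorEq,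
    not_false_eq_true, true_and, inter_playT_nonempty_iff]
  constructor
  · intro hp
    refine or_iff_not_imp_left.2 fun hσ => ⟨?_, hσ, fun i hi => ?_⟩
    · obtain ⟨j, hj0, hj, hne⟩ := hp 0 (by simpa [List.length_pos_iff] using hσ)
      obtain ⟨k, rfl⟩ := Nat.exists_eq_add_of_le' hj0
      exact ⟨k, by omega, hne⟩
    · obtain ⟨j, hij, hj, hne⟩ := hp (i + 1) (by omega)
      obtain ⟨k, rfl⟩ := Nat.exists_eq_add_of_le' (show 1 ≤ j by omega)
      exact ⟨k, by omega, by omega, hne⟩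
  · rintro (rfl | ⟨⟨k, hk, hne⟩, -, hp⟩) (_ | i) hi
    · simp at hi
    · simp at hi
    · exact ⟨k + 1, by omega, by omega, hne⟩
    · obtain ⟨j, hij, hj, hne⟩ := hp i (by omega)
      exact ⟨j + 1, by omega, by omega, hne⟩

theorem IsPointed.of_append {σ τ : Trace P L} (hp : IsPointed (σ ++ τ)) (hτ : τ ≠ []) :
    IsPointed τ := by
  induction σ with
  | nil => exact hp
  | cons α σ ih =>
    rcases isPointed_cons.1 hp with h | ⟨-, h⟩
    · simp_all
    · exact ih h

theorem IsPointed.swap_append {σ τ : Trace P L} {α β : Comm P L}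
    (hd : play α ∩ play β = ∅) (hp : IsPointed (σ ++ α :: β :: τ)) :
    IsPointed (σ ++ β :: α :: τ) := by
  induction σ with
  | nil =>
    simp only [List.nil_append, isPointed_cons, reduceCtorEq, false_or, playT,
      Set.inter_union_distrib_left, hd, Set.empty_union] at hp ⊢
    obtain ⟨hατ, rfl | hβτ⟩ := hp
    · simp [playT] at hατ
    · exact ⟨hβτ.1.mono Set.subset_union_right, .inr ⟨hατ, hβτ.2⟩⟩
  | cons γ σ ih =>
    have hplay : playT (σ ++ α :: β :: τ) = playT (σ ++ β :: α :: τ) := by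
      simp only [playT_append, playT, Set.union_left_comm]
    simp only [List.cons_append, isPointed_cons, List.append_eq_nil_iff, reduceCtorEq,
      and_false, false_or, hplay] at hp ⊢
    exact ⟨hp.1, ih hp.2⟩

theorem IsPointed.ne_nil_of_disjoint {σ τ : Trace P L} {α β : Comm P L}
    (hd : play α ∩ play β = ∅) (hp : IsPointed (σ ++ α :: β :: τ)) : τ ≠ [] := by
  rintro rfl
  have := isPointed_cons.1 (hp.of_append (by simp))
  simp [playT, hd] at this

def SwapStep (τ τ' : Trace P L) : Prop :=
  ∃ σ σ' α β, play α ∩ play β = ∅ ∧ τ = σ ++ α :: β :: σ' ∧ τ' = σ ++ β :: α :: σ'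

instance : Std.Symm (SwapStep (P := P) (L := L)) where
  symm := by
    rintro _ _ ⟨σ, σ', α, β, hd, rfl, rfl⟩
    exact ⟨σ, σ', β, α, by rwa [Set.inter_comm], rfl, rfl⟩

theorem PermEq.reflTransGen_swapStep {τ τ' : Trace P L} (h : PermEq τ τ') :
    Relation.ReflTransGen SwapStep τ τ' := by
  induction h with
  | swap σ σ' α β hd => exact .single ⟨σ, σ', α, β, hd, rfl, rfl⟩
  | refl σ => exact .refl
  | symm _ ih => exact Std.Symm.symm _ _ ih
  | trans _ _ ih₁ ih₂ => exact ih₁.trans ih₂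

theorem IsPointed.swapStep {τ τ' : Trace P L} (hp : IsPointed τ) (h : SwapStep τ τ') :
    IsPointed τ' ∧ τ.getLast? = τ'.getLast? := by
  obtain ⟨σ, σ', α, β, hd, rfl, rfl⟩ := h
  refine ⟨hp.swap_append hd, ?_⟩
  have hσ' := hp.ne_nil_of_disjoint hd
  rw [show σ ++ α :: β :: σ' = (σ ++ [α, β]) ++ σ' by simp,
    show σ ++ β :: α :: σ' = (σ ++ [β, α]) ++ σ' by simp,
    List.getLast?_append_of_ne_nil _ hσ', List.getLast?_append_of_ne_nil _ hσ']

/-- pointedness and the last communication are invariant under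
permutation equivalence. -/
theorem permEq_pointed_last {P L : Type} {σ σ' : Trace P L}
    (hp : IsPointed σ) (h : PermEq σ σ') :
    IsPointed σ' ∧ σ.getLast? = σ'.getLast? := by
  have hswaps := h.reflTransGen_swapStep
  clear h
  induction hswaps with
  | refl => exact ⟨hp, rfl⟩
  | tail _ hstep ih =>
    obtain ⟨hp', hlast⟩ := ih
    obtain ⟨hp'', hlast'⟩ := hp'.swapStep hstep
    exact ⟨hp'', hlast.trans hlast'⟩
end
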